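/- For every α ∈ (0,2] and every f ∈ C^∞(𝕋^d) with mean zero there is a constant C > 0 (depending only on f, d, α) such that for all n ≥ 1, ‖C_n‖₂ := (n^{−d} ∑_{x∈ℤ_n^d} |C_n(x)|²)^{1/2} ≤ C n^{−d/α − 1}. -/

import Mathlib

open MeasureTheory Filter Finset
open scoped BigOperators Topology Real

noncomputable section

/-- `e^{2πi t}`. -/
def e2pi (t : ℝ) : ℂ := Complex.exp (2 * (Real.pi : ℂ) * Complex.I * (t : ℂ))

/-- The integers in `[−n/2, n/2)`, a complete residue system mod `n`. -/
def boxZ (n : ℕ) : Finset ℤ := Finset.Ico (-((n : ℤ) / 2)) ((n : ℤ) - (n : ℤ) / 2)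

/-- The discrete torus `ℤ_n^d = [−n/2, n/2]^d ∩ ℤ^d` (a complete residue system mod `n`). -/
def boxZd (d n : ℕ) : Finset (Fin d → ℤ) := Fintype.piFinset fun _ => boxZ n

/-- Dot product of two integer vectors, as a real number. -/
def dotZ {d : ℕ} (x z : Fin d → ℤ) : ℝ := ∑ i, (x i : ℝ) * (z i : ℝ)

/-- Dot product `z · x` of an integer vector with a real vector. -/
def dotR {d : ℕ} (z : Fin d → ℤ) (x : Fin d → ℝ) : ℝ := ∑ i, (z i : ℝ) * x i

/-- The squared Euclidean norm `‖z‖²` of an integer vector. -/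
def nsq {d : ℕ} (z : Fin d → ℤ) : ℝ := ∑ i, ((z i : ℝ)) ^ 2

/-- The eigenvalue `λ_w = −4 ∑_i sin²(π w_i/n)` of the discrete Laplacian on `ℤ_n^d`. -/
def lambdaN (d n : ℕ) (z : Fin d → ℤ) : ℝ := -4 * ∑ i, Real.sin (Real.pi * (z i : ℝ) / n) ^ 2

/-- The normalizing constant `c_n = 4π² n^{d − d/α − 2}`. -/
def cN (d : ℕ) (α : ℝ) (n : ℕ) : ℝ := 4 * Real.pi ^ 2 * (n : ℝ) ^ ((d : ℝ) - (d : ℝ) / α - 2)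

/-- The point `y/n ∈ 𝕋_n^d ⊂ 𝕋^d` associated with `y ∈ ℤ_n^d`. -/
def tor {d : ℕ} (n : ℕ) (y : Fin d → ℤ) : Fin d → ℝ := fun i => (y i : ℝ) / n

/-- `f ∈ C^∞(𝕋^d)` with mean zero, modelled as a smooth `ℤ^d`-periodic function on `ℝ^d`
with zero integral over a fundamental domain. -/
def IsSmoothPeriodicMeanZero {d : ℕ} (f : (Fin d → ℝ) → ℝ) : Prop :=
  ContDiff ℝ (⊤ : ℕ∞) f ∧ (∀ (x : Fin d → ℝ) (z : Fin d → ℤ), f (x + fun i => (z i : ℝ)) = f x) ∧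
    (∫ x in Set.Icc (0 : Fin d → ℝ) 1, f x) = 0

/-- Fourier coefficient `f̂(z) = ∫_{𝕋^d} f(x) e^{−2πi z·x} dx`. -/
def fHat {d : ℕ} (f : (Fin d → ℝ) → ℝ) (z : Fin d → ℤ) : ℂ :=
  ∫ x in Set.Icc (0 : Fin d → ℝ) 1, (f x : ℂ) * e2pi (-(dotR z x))

/-- Discrete Fourier coefficient `f̂_n(z) = n^{−d} ∑_{w∈𝕋_n^d} f(w) e^{2πi w·z}`. -/
def fHatN {d : ℕ} (f : (Fin d → ℝ) → ℝ) (n : ℕ) (z : Fin d → ℤ) : ℂ :=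
  ((n : ℂ) ^ d)⁻¹ * ∑ y ∈ boxZd d n, (f (tor n y) : ℂ) * e2pi (dotZ y z / n)

/-- `R_n(w) = ∫_{B(w,1/(2n))} (f(u) − f(w)) du`, `B` the ball in the `ℓ^∞` metric. -/
def Rn {d : ℕ} (f : (Fin d → ℝ) → ℝ) (n : ℕ) (w : Fin d → ℝ) : ℝ :=
  ∫ u in Set.Icc (fun i => w i - 1 / (2 * n)) (fun i => w i + 1 / (2 * n)), (f u - f w)

/-- `l_n(x) = −(c_n/n^{2d}) ∑_{w∈𝕋_n^d} f(w) ∑_{z∈ℤ_n^d∖{0}} χ_{−z}(x) χ_{−z}(nw)/λ_z`. -/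
def lN {d : ℕ} (f : (Fin d → ℝ) → ℝ) (α : ℝ) (n : ℕ) (x : Fin d → ℤ) : ℂ :=
  -((cN d α n / (n : ℝ) ^ (2 * d) : ℝ) : ℂ) * ∑ y ∈ boxZd d n, (f (tor n y) : ℂ) *
    ∑ z ∈ (boxZd d n).erase 0, e2pi (-(dotZ x z + dotZ y z) / n) / ((lambdaN d n z : ℝ) : ℂ)

/-- `C_n(x) = −(c_n/n^{d}) ∑_{w∈𝕋_n^d} R_n(w) ∑_{z∈ℤ_n^d∖{0}} χ_{−z}(x) χ_{−z}(nw)/λ_z`. -/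
def cnF {d : ℕ} (f : (Fin d → ℝ) → ℝ) (α : ℝ) (n : ℕ) (x : Fin d → ℤ) : ℂ :=
  -((cN d α n / (n : ℝ) ^ d : ℝ) : ℂ) * ∑ y ∈ boxZd d n, (Rn f n (tor n y) : ℂ) *
    ∑ z ∈ (boxZd d n).erase 0, e2pi (-(dotZ x z + dotZ y z) / n) / ((lambdaN d n z : ℝ) : ℂ)

/-- `k_n = l_n + C_n`. -/
def kN {d : ℕ} (f : (Fin d → ℝ) → ℝ) (α : ℝ) (n : ℕ) (x : Fin d → ℤ) : ℂ :=
  lN f α n x + cnF f α n x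

/-- The limiting field `(−Δ)^{−1}f(x) = ∑_{z∈ℤ^d∖{0}} ‖z‖^{−2} f̂(z) e^{−2πi z·x}`. -/
def contField {d : ℕ} (f : (Fin d → ℝ) → ℝ) (x : Fin d → ℝ) : ℂ :=
  ∑' z : {z : Fin d → ℤ // z ≠ 0},
    e2pi (-(dotR (z : Fin d → ℤ) x)) / ((nsq (z : Fin d → ℤ) : ℝ) : ℂ) * fHat f (z : Fin d → ℤ)


lemma e2pi_zero : e2pi 0 = 1 := by simp [e2pi]
lemma e2pi_add (s t : ℝ) : e2pi (s + t) = e2pi s * e2pi t := by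
  unfold e2pi; rw [← Complex.exp_add]; push_cast; ring_nf
lemma e2pi_zpow (x : ℤ) (t : ℝ) : e2pi (x * t) = e2pi t ^ x := by
  unfold e2pi; rw [← Complex.exp_int_mul]; congr 1; push_cast; ring
lemma e2pi_conj (t : ℝ) : (starRingEnd ℂ) (e2pi t) = e2pi (-t) := by
  unfold e2pi
  rw [← Complex.exp_conj]
  congr 1
  have h : ((starRingEnd ℂ) (2 * (Real.pi:ℂ) * Complex.I * (t:ℂ))) =
      2 * (Real.pi:ℂ) * (-Complex.I) * (t:ℂ) := by
    simp [map_mul, Complex.conj_I, Complex.conj_ofReal, map_ofNat]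
  rw [h]; push_cast; ring
lemma e2pi_sum {ι : Type*} (s : Finset ι) (g : ι → ℝ) :
    e2pi (∑ i ∈ s, g i) = ∏ i ∈ s, e2pi (g i) := by
  classical
  induction s using Finset.cons_induction with
  | empty => simp [e2pi_zero]
  | cons a s ha ih => rw [Finset.sum_cons, Finset.prod_cons, e2pi_add, ih]
lemma e2pi_int (m : ℤ) : e2pi (m : ℝ) = 1 := by
  have : ((m : ℝ)) = (m : ℝ) * 1 := by ring
  rw [this, e2pi_zpow]
  have h1 : e2pi 1 = 1 := by
    unfold e2pi
    rw [show (2 * (Real.pi:ℂ) * Complex.I * ((1:ℝ):ℂ)) = 2 * Real.pi * Complex.I by push_cast; ring,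
      Complex.exp_two_pi_mul_I]
  simp [h1]

lemma card_boxZ (n : ℕ) : (boxZ n).card = n := by
  rw [boxZ, Int.card_Ico]; omega

lemma mem_boxZ {n : ℕ} {x : ℤ} (hx : x ∈ boxZ n) : -((n:ℤ)/2) ≤ x ∧ x < (n:ℤ) - (n:ℤ)/2 := by
  simpa [boxZ] using hx

lemma sum_boxZ_zero (n : ℕ) (hn : 1 ≤ n) (m : ℤ) (hm0 : m ≠ 0) (hm : |m| < n) :
    ∑ x ∈ boxZ n, e2pi ((x : ℝ) * (m : ℝ) / n) = 0 := by
  have hn0 : (n : ℝ) ≠ 0 := by positivity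
  set ω := e2pi ((m : ℝ) / n) with hω
  have hpow : ∀ x : ℤ, e2pi ((x : ℝ) * (m : ℝ) / n) = ω ^ x := by
    intro x; rw [mul_div_assoc]; exact e2pi_zpow x _
  have hω1 : ω ≠ 1 := by
    intro h
    rw [hω, e2pi, Complex.exp_eq_one_iff] at h
    obtain ⟨k, hk⟩ := h
    have h2 : (2 * (Real.pi:ℂ) * Complex.I) ≠ 0 := by
      simp [Real.pi_ne_zero, Complex.I_ne_zero]
    have hck : (((m : ℝ) / n : ℝ) : ℂ) = (k : ℂ) := by
      field_simp at hk ⊢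
      exact hk
    have hrk : (m : ℝ) / n = (k : ℝ) := by exact_mod_cast hck
    have hmk : (m : ℝ) = (k : ℝ) * n := by field_simp at hrk; linarith [hrk]
    have hmk' : m = k * n := by exact_mod_cast hmk
    rcases eq_or_ne k 0 with h0 | h0
    · exact hm0 (by simp [hmk', h0])
    · have : (n : ℤ) ≤ |m| := by
        rw [hmk', abs_mul]
        calc (n:ℤ) = 1 * n := (one_mul _).symm
        _ ≤ |k| * |(n:ℤ)| := by
            apply mul_le_mul (Int.one_le_abs (by omega)) (le_abs_self _) (by positivity) (abs_nonneg _)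
      omega
  have hωn : ω ^ (n : ℕ) = 1 := by
    have : ω ^ ((n : ℤ)) = e2pi ((n : ℝ) * ((m : ℝ) / n)) := (e2pi_zpow _ _).symm
    rw [show (n : ℝ) * ((m : ℝ) / n) = (m : ℝ) by field_simp] at this
    rw [e2pi_int] at this
    exact_mod_cast this
  -- reindex
  have hab : ((n:ℤ) - (n:ℤ)/2) = (-((n:ℤ)/2)) + n := by omega
  set a : ℤ := -((n:ℤ)/2)
  have hsum : ∑ x ∈ boxZ n, ω ^ x = ω ^ a * ∑ k ∈ Finset.range n, ω ^ (k : ℕ) := by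
    rw [Finset.mul_sum]
    rw [boxZ, hab]
    apply Finset.sum_nbij' (i := fun x => (x - a).toNat) (j := fun k => a + (k : ℤ))
    · intro x hx
      simp only [Finset.mem_Ico] at hx
      simp only [Finset.mem_range]
      omega
    · intro k hk
      simp only [Finset.mem_range] at hk
      simp only [Finset.mem_Ico]
      omega
    · intro x hx
      simp only [Finset.mem_Ico] at hx
      omega
    · intro k hk; omega
    · intro x hx
      simp only [Finset.mem_Ico] at hx
      rw [← zpow_natCast ω, ← zpow_add₀, ]
      · congr 1; omega
      · intro h; rw [h, zero_pow (by omega)] at hωn; exact absurd hωn zero_ne_one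
  calc ∑ x ∈ boxZ n, e2pi ((x : ℝ) * (m : ℝ) / n)
      = ∑ x ∈ boxZ n, ω ^ x := by exact Finset.sum_congr rfl fun x _ => hpow x
    _ = ω ^ a * ∑ k ∈ Finset.range n, ω ^ (k : ℕ) := hsum
    _ = 0 := by rw [geom_sum_eq hω1, hωn]; simp


lemma dotZ_comm {d : ℕ} (x z : Fin d → ℤ) : dotZ x z = dotZ z x := by
  unfold dotZ; exact Finset.sum_congr rfl fun i _ => mul_comm _ _

lemma dotZ_sub {d : ℕ} (x z z' : Fin d → ℤ) : dotZ x (z' - z) = dotZ x z' - dotZ x z := by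
  unfold dotZ
  rw [← Finset.sum_sub_distrib]
  refine Finset.sum_congr rfl fun i _ => ?_
  push_cast [Pi.sub_apply]
  ring

lemma card_boxZd (d n : ℕ) : (boxZd d n).card = n ^ d := by
  simp [boxZd, Fintype.card_piFinset, card_boxZ]

lemma orth (d n : ℕ) (hn : 1 ≤ n) (m : Fin d → ℤ) (hm : ∀ i, |m i| < n) :
    ∑ x ∈ boxZd d n, e2pi (dotZ x m / n) = if m = 0 then ((n : ℂ)) ^ d else 0 := by
  have key : ∀ x : Fin d → ℤ, e2pi (dotZ x m / n)
      = ∏ i, e2pi ((x i : ℝ) * (m i : ℝ) / n) := by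
    intro x
    rw [dotZ, Finset.sum_div, e2pi_sum]
  rw [Finset.sum_congr rfl fun x _ => key x, boxZd,
    ← Finset.prod_univ_sum (fun _ : Fin d => boxZ n)
      (fun i t => e2pi ((t : ℝ) * (m i : ℝ) / n))]
  by_cases h : m = 0
  · subst h
    simp only [if_pos rfl]
    have : ∀ i : Fin d, ∑ t ∈ boxZ n, e2pi ((t : ℝ) * ((0 : Fin d → ℤ) i : ℝ) / n)
        = (n : ℂ) := by
      intro i
      simp only [Pi.zero_apply, Int.cast_zero, mul_zero, zero_div, e2pi_zero]
      rw [Finset.sum_const, card_boxZ]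
      simp
    rw [Finset.prod_congr rfl fun i _ => this i, Finset.prod_const, Finset.card_univ,
      Fintype.card_fin]
    simp
  · rw [if_neg h]
    obtain ⟨i, hi⟩ : ∃ i, m i ≠ 0 := by
      by_contra hc
      push_neg at hc
      exact h (funext hc)
    exact Finset.prod_eq_zero (Finset.mem_univ i) (sum_boxZ_zero n hn (m i) hi (hm i))

lemma mem_boxZd {d n : ℕ} {x : Fin d → ℤ} (hx : x ∈ boxZd d n) :
    ∀ i, -((n:ℤ)/2) ≤ x i ∧ x i < (n:ℤ) - (n:ℤ)/2 := by
  intro i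
  rw [boxZd, Fintype.mem_piFinset] at hx
  exact mem_boxZ (hx i)

lemma plancherel (d n : ℕ) (hn : 1 ≤ n) (S : Finset (Fin d → ℤ)) (hS : S ⊆ boxZd d n)
    (a : (Fin d → ℤ) → ℂ) :
    ∑ x ∈ boxZd d n, ‖∑ z ∈ S, a z * e2pi (-(dotZ x z) / n)‖ ^ 2
      = (n : ℝ) ^ d * ∑ z ∈ S, ‖a z‖ ^ 2 := by
  set F : (Fin d → ℤ) → ℂ := fun x => ∑ z ∈ S, a z * e2pi (-(dotZ x z) / n) with hF
  have habs : ∀ w : ℂ, ((‖w‖ ^ 2 : ℝ) : ℂ) = w * (starRingEnd ℂ) w := by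
    intro w
    rw [Complex.mul_conj]
    norm_cast
    exact Complex.sq_norm _
  have hC : ∑ x ∈ boxZd d n, (F x * (starRingEnd ℂ) (F x))
      = (n : ℂ) ^ d * ∑ z ∈ S, (a z * (starRingEnd ℂ) (a z)) := by
    have hconj : ∀ x, (starRingEnd ℂ) (F x)
        = ∑ z' ∈ S, (starRingEnd ℂ) (a z') * e2pi (dotZ x z' / n) := by
      intro x
      rw [hF, map_sum]
      refine Finset.sum_congr rfl fun z' _ => ?_
      rw [map_mul, e2pi_conj, neg_div, neg_neg]
    have hstep : ∀ x, F x * (starRingEnd ℂ) (F x)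
        = ∑ z ∈ S, ∑ z' ∈ S,
            (a z * (starRingEnd ℂ) (a z')) * e2pi (dotZ x (z' - z) / n) := by
      intro x
      rw [hconj, hF, Finset.sum_mul_sum]
      refine Finset.sum_congr rfl fun z _ => Finset.sum_congr rfl fun z' _ => ?_
      rw [dotZ_sub, sub_div, sub_eq_add_neg, add_comm, e2pi_add, neg_div]
      ring
    have horth : ∀ z ∈ S, ∀ z' ∈ S,
        ∑ x ∈ boxZd d n, e2pi (dotZ x (z' - z) / n) = if z' = z then (n : ℂ) ^ d else 0 := by
      intro z hz z' hz'
      rw [orth d n hn _ (fun i => by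
        have h1 := mem_boxZd (hS hz) i
        have h2 := mem_boxZd (hS hz') i
        have he : (z' - z) i = z' i - z i := rfl
        rw [he, abs_lt]
        omega)]
      congr 1
      simp [sub_eq_zero]
    calc ∑ x ∈ boxZd d n, (F x * (starRingEnd ℂ) (F x))
        = ∑ x ∈ boxZd d n, ∑ z ∈ S, ∑ z' ∈ S,
            (a z * (starRingEnd ℂ) (a z')) * e2pi (dotZ x (z' - z) / n) :=
          Finset.sum_congr rfl fun x _ => hstep x
      _ = ∑ z ∈ S, ∑ z' ∈ S, (a z * (starRingEnd ℂ) (a z')) *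
            ∑ x ∈ boxZd d n, e2pi (dotZ x (z' - z) / n) := by
          rw [Finset.sum_comm]
          refine Finset.sum_congr rfl fun z _ => ?_
          rw [Finset.sum_comm]
          exact Finset.sum_congr rfl fun z' _ => (Finset.mul_sum _ _ _).symm
      _ = ∑ z ∈ S, (a z * (starRingEnd ℂ) (a z)) * (n : ℂ) ^ d := by
          refine Finset.sum_congr rfl fun z hz => ?_
          rw [Finset.sum_congr rfl fun z' hz' => by rw [horth z hz z' hz']]
          have hsimp : ∀ z' ∈ S, (a z * (starRingEnd ℂ) (a z')) *
              (if z' = z then (n : ℂ) ^ d else 0)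
              = if z' = z then (a z * (starRingEnd ℂ) (a z)) * (n : ℂ) ^ d else 0 := by
            intro z' _
            split <;> simp_all
          rw [Finset.sum_congr rfl hsimp, Finset.sum_ite_eq' S z, if_pos hz]
      _ = (n : ℂ) ^ d * ∑ z ∈ S, (a z * (starRingEnd ℂ) (a z)) := by
          rw [Finset.mul_sum]
          exact Finset.sum_congr rfl fun z _ => mul_comm _ _
  have hL : ((∑ x ∈ boxZd d n, ‖F x‖ ^ 2 : ℝ) : ℂ)
      = ∑ x ∈ boxZd d n, F x * (starRingEnd ℂ) (F x) := by
    rw [Complex.ofReal_sum]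
    exact Finset.sum_congr rfl fun x _ => habs (F x)
  have hR : (((n : ℝ) ^ d * ∑ z ∈ S, ‖a z‖ ^ 2 : ℝ) : ℂ)
      = (n : ℂ) ^ d * ∑ z ∈ S, (a z * (starRingEnd ℂ) (a z)) := by
    rw [Complex.ofReal_mul, Complex.ofReal_sum,
      Finset.sum_congr rfl fun z _ => habs (a z)]
    norm_cast
  have hfin := hC
  rw [← hL, ← hR] at hfin
  exact_mod_cast hfin


lemma lambda_lb (d n : ℕ) (hn : 1 ≤ n) (z : Fin d → ℤ) (hz : z ∈ boxZd d n) (h0 : z ≠ 0) :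
    16 / (n : ℝ) ^ 2 ≤ |lambdaN d n z| := by
  have hnR : (0 : ℝ) < n := by exact_mod_cast hn
  obtain ⟨i, hi⟩ : ∃ i, z i ≠ 0 := by
    by_contra hc; push_neg at hc; exact h0 (funext hc)
  have hsum_nonneg : (0 : ℝ) ≤ ∑ j, Real.sin (Real.pi * (z j : ℝ) / n) ^ 2 :=
    Finset.sum_nonneg fun j _ => sq_nonneg _
  have habs : |lambdaN d n z| = 4 * ∑ j, Real.sin (Real.pi * (z j : ℝ) / n) ^ 2 := by
    rw [lambdaN, abs_mul]
    rw [abs_of_nonneg hsum_nonneg]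
    norm_num
  rw [habs]
  have hterm : Real.sin (Real.pi * (z i : ℝ) / n) ^ 2 ≤
      ∑ j, Real.sin (Real.pi * (z j : ℝ) / n) ^ 2 :=
    Finset.single_le_sum (f := fun j => Real.sin (Real.pi * (z j : ℝ) / n) ^ 2)
      (fun j _ => sq_nonneg _) (Finset.mem_univ i)
  have hzi := mem_boxZd hz i
  have h1 : (1 : ℤ) ≤ |z i| := Int.one_le_abs hi
  have h2 : 2 * |z i| ≤ (n : ℤ) := by
    rcases abs_cases (z i) with ⟨h, _⟩ | ⟨h, _⟩ <;> omega
  have h1R : (1 : ℝ) ≤ |(z i : ℝ)| := by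
    rw [← Int.cast_abs]; exact_mod_cast h1
  have h2R : 2 * |(z i : ℝ)| ≤ (n : ℝ) := by
    rw [← Int.cast_abs]; exact_mod_cast h2
  have hsq : Real.sin (Real.pi * (z i : ℝ) / n) ^ 2
      = Real.sin (Real.pi * |(z i : ℝ)| / n) ^ 2 := by
    rcases abs_cases ((z i : ℝ)) with ⟨h, _⟩ | ⟨h, _⟩
    · rw [h]
    · rw [h]
      rw [show Real.pi * -(z i : ℝ) / n = -(Real.pi * (z i : ℝ) / n) by ring, Real.sin_neg,
        neg_sq]
  have hx0 : 0 ≤ Real.pi * |(z i : ℝ)| / n := by positivity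
  have hx1 : Real.pi * |(z i : ℝ)| / n ≤ Real.pi / 2 := by
    rw [div_le_div_iff₀ hnR (by norm_num)]
    nlinarith [Real.pi_pos]
  have hsin := Real.mul_le_sin hx0 hx1
  have hsin2 : 2 / (n : ℝ) ≤ Real.sin (Real.pi * |(z i : ℝ)| / n) := by
    refine le_trans ?_ hsin
    rw [show 2 / Real.pi * (Real.pi * |(z i : ℝ)| / n) = 2 * |(z i : ℝ)| / n by
      field_simp]
    rw [div_le_div_iff₀ hnR hnR]
    nlinarith
  have hsin2sq : (2 / (n : ℝ)) ^ 2 ≤ Real.sin (Real.pi * |(z i : ℝ)| / n) ^ 2 := by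
    have h2n : (0 : ℝ) < 2 / (n : ℝ) := by positivity
    exact sq_le_sq' (by linarith) hsin2
  calc 16 / (n : ℝ) ^ 2 = 4 * (2 / (n : ℝ)) ^ 2 := by field_simp; ring
    _ ≤ 4 * Real.sin (Real.pi * |(z i : ℝ)| / n) ^ 2 := by linarith
    _ = 4 * Real.sin (Real.pi * (z i : ℝ) / n) ^ 2 := by rw [hsq]
    _ ≤ 4 * ∑ j, Real.sin (Real.pi * (z j : ℝ) / n) ^ 2 := by linarith

lemma R_bound {d : ℕ} (f : (Fin d → ℝ) → ℝ) (hf : ContDiff ℝ (⊤ : ℕ∞) f) :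
    ∃ L : ℝ, 0 ≤ L ∧ ∀ n : ℕ, 1 ≤ n → ∀ y ∈ boxZd d n,
      |Rn f n (tor n y)| ≤ L / (n : ℝ) ^ (d + 1) := by
  set K : Set (Fin d → ℝ) := Set.Icc (fun _ => (-1 : ℝ)) (fun _ => 1) with hK
  have hKc : IsCompact K := isCompact_Icc
  have hKconv : Convex ℝ K := convex_Icc _ _
  obtain ⟨C, hC⟩ := hKc.exists_bound_of_continuousOn
    ((hf.continuous_fderiv (by simp)).continuousOn (s := K))
  set L := max C 0 with hL
  have hdiff : ∀ x ∈ K, DifferentiableAt ℝ f x := fun x _ =>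
    (hf.differentiable (by simp)).differentiableAt
  have hlip : ∀ u ∈ K, ∀ w ∈ K, ‖f u - f w‖ ≤ L * ‖u - w‖ := fun u hu w hw =>
    hKconv.norm_image_sub_le_of_norm_fderiv_le hdiff
      (fun x hx => le_trans (hC x hx) (le_max_left _ _)) hw hu
  refine ⟨L, le_max_right _ _, fun n hn y hy => ?_⟩
  have hnR : (0 : ℝ) < n := by exact_mod_cast hn
  have hn1 : (1 : ℝ) ≤ n := by exact_mod_cast hn
  set c : ℝ := 1 / (2 * n) with hc
  have hc0 : 0 < c := by positivity
  have hchalf : c ≤ 1 / 2 := by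
    rw [hc, div_le_div_iff₀ (by positivity) (by norm_num)]
    nlinarith
  set w : Fin d → ℝ := tor n y with hw
  have hwK : ∀ i, |w i| ≤ 1 / 2 := by
    intro i
    have hb := mem_boxZd hy i
    have : 2 * |y i| ≤ (n : ℤ) := by
      rcases abs_cases (y i) with ⟨h, _⟩ | ⟨h, _⟩ <;> omega
    have h2R : 2 * |(y i : ℝ)| ≤ (n : ℝ) := by rw [← Int.cast_abs]; exact_mod_cast this
    rw [hw, tor, abs_div, abs_of_pos hnR, div_le_div_iff₀ hnR (by norm_num)]
    nlinarith [abs_nonneg ((y i : ℝ))]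
  set B : Set (Fin d → ℝ) := Set.Icc (fun i => w i - c) (fun i => w i + c) with hB
  have hBK : B ⊆ K := by
    intro u hu
    rw [hB, Set.mem_Icc] at hu
    rw [hK, Set.mem_Icc]
    constructor
    · intro i
      have h1i : w i - c ≤ u i := hu.1 i
      have hwi := (abs_le.mp (hwK i)).1
      show (-1 : ℝ) ≤ u i
      linarith
    · intro i
      have h2i : u i ≤ w i + c := hu.2 i
      have hwi := (abs_le.mp (hwK i)).2
      show u i ≤ (1 : ℝ)
      linarith
  have hwB : w ∈ K := by
    rw [hK, Set.mem_Icc]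
    constructor
    · intro i
      have hwi := (abs_le.mp (hwK i)).1
      show (-1 : ℝ) ≤ w i
      linarith
    · intro i
      have hwi := (abs_le.mp (hwK i)).2
      show w i ≤ (1 : ℝ)
      linarith
  have hvol : (MeasureTheory.volume B).toReal = (1 / (n : ℝ)) ^ d := by
    rw [hB, Real.volume_Icc_pi_toReal (fun i => by dsimp; linarith)]
    rw [Finset.prod_congr rfl (fun i _ => show (w i + c) - (w i - c) = 1 / (n : ℝ) by
      rw [hc]; ring)]
    simp
  have hvolfin : MeasureTheory.volume B < ⊤ := by
    rw [hB, Real.volume_Icc_pi]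
    exact ENNReal.prod_lt_top fun i _ => ENNReal.ofReal_lt_top
  have hpt : ∀ u ∈ B, ‖f u - f (w : Fin d → ℝ)‖ ≤ L * c := by
    intro u hu
    refine le_trans (hlip u (hBK hu) w hwB) ?_
    have hnorm : ‖u - w‖ ≤ c := by
      rw [pi_norm_le_iff_of_nonneg hc0.le]
      intro i
      rw [hB, Set.mem_Icc] at hu
      have h1 := hu.1 i
      have h2 := hu.2 i
      rw [Pi.sub_apply, Real.norm_eq_abs, abs_le]
      constructor <;> dsimp at h1 h2 <;> linarith
    exact mul_le_mul_of_nonneg_left hnorm (le_max_right C 0)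
  have hmeas : MeasureTheory.AEStronglyMeasurable (fun u => f u - f w)
      (MeasureTheory.volume.restrict B) :=
    ((hf.continuous.sub continuous_const).aestronglyMeasurable).restrict
  have hint := MeasureTheory.norm_setIntegral_le_of_norm_le_const hvolfin hpt
  rw [measureReal_def, hvol] at hint
  calc |Rn f n (tor n y)| ≤ L * c * (1 / (n : ℝ)) ^ d := hint
    _ ≤ L / (n : ℝ) ^ (d + 1) := by
        have hL0 : (0 : ℝ) ≤ L := le_max_right C 0
        have h1 : L * c * (1 / (n : ℝ)) ^ d = (L / 2) / (n : ℝ) ^ (d + 1) := by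
          rw [hc, pow_succ]
          ring
        rw [h1]
        gcongr
        linarith

lemma e2pi_abs (t : ℝ) : ‖e2pi t‖ = 1 := by
  rw [e2pi, Complex.norm_exp]
  simp

/-- There is `C > 0` with `‖C_n‖₂ = (n^{−d} ∑_{x∈ℤ_n^d} |C_n(x)|²)^{1/2} ≤ C n^{−d/α−1}`
for all `n ≥ 1`. -/
theorem cnF_l2_bound (d : ℕ) (hd : 1 ≤ d) (α : ℝ) (hα1 : 0 < α) (hα2 : α ≤ 2)
    (f : (Fin d → ℝ) → ℝ) (hf : IsSmoothPeriodicMeanZero f) :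
    ∃ C : ℝ, 0 < C ∧ ∀ n : ℕ, 1 ≤ n →
      Real.sqrt (((n : ℝ) ^ d)⁻¹ * ∑ x ∈ boxZd d n, ‖cnF f α n x‖ ^ 2) ≤
        C * (n : ℝ) ^ (-(d : ℝ) / α - 1) := by
  obtain ⟨L, hL0, hLb⟩ := R_bound f hf.1
  refine ⟨Real.pi ^ 2 * (L + 1) / 4, by positivity, fun n hn => ?_⟩
  have hN : (0 : ℝ) < n := by exact_mod_cast hn
  have hNne : ((n : ℝ)) ≠ 0 := ne_of_gt hN
  set N : ℝ := (n : ℝ) with hNdef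
  set S : Finset (Fin d → ℤ) := (boxZd d n).erase 0 with hS
  have hSsub : S ⊆ boxZd d n := Finset.erase_subset _ _
  set a : (Fin d → ℤ) → ℂ := fun z =>
    (∑ y ∈ boxZd d n, (Rn f n (tor n y) : ℂ) * e2pi (-(dotZ y z) / n)) /
      ((lambdaN d n z : ℝ) : ℂ) with ha
  set cst : ℂ := -((cN d α n / (n : ℝ) ^ d : ℝ) : ℂ) with hcst
  -- rewrite cnF
  have hrw : ∀ x : Fin d → ℤ, cnF f α n x = cst * ∑ z ∈ S, a z * e2pi (-(dotZ x z) / n) := by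
    intro x
    rw [cnF]
    congr 1
    calc ∑ y ∈ boxZd d n, (Rn f n (tor n y) : ℂ) *
          ∑ z ∈ S, e2pi (-(dotZ x z + dotZ y z) / n) / ((lambdaN d n z : ℝ) : ℂ)
        = ∑ y ∈ boxZd d n, ∑ z ∈ S, (Rn f n (tor n y) : ℂ) *
            (e2pi (-(dotZ x z) / n) * e2pi (-(dotZ y z) / n)) / ((lambdaN d n z : ℝ) : ℂ) := by
          refine Finset.sum_congr rfl fun y _ => ?_
          rw [Finset.mul_sum]
          refine Finset.sum_congr rfl fun z _ => ?_
          rw [show -(dotZ x z + dotZ y z) / (n : ℝ)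
              = -(dotZ x z) / n + -(dotZ y z) / n by ring, e2pi_add]
          ring
      _ = ∑ z ∈ S, a z * e2pi (-(dotZ x z) / n) := by
          rw [Finset.sum_comm]
          refine Finset.sum_congr rfl fun z _ => ?_
          rw [ha]
          simp only []
          rw [div_mul_eq_mul_div, Finset.sum_mul, Finset.sum_div]
          refine Finset.sum_congr rfl fun y _ => ?_
          ring
  -- Plancherel for cnF
  have hplan := plancherel d n hn S hSsub a
  have habs_cst : ‖cst‖ = cN d α n / N ^ d := by
    have hcN0 : 0 ≤ cN d α n := by rw [cN]; positivity
    rw [hcst, ← Complex.ofReal_neg, Complex.norm_real, Real.norm_eq_abs, abs_neg,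
      abs_of_nonneg (div_nonneg hcN0 (by positivity))]
  have hsum1 : ∑ x ∈ boxZd d n, ‖cnF f α n x‖ ^ 2
      = (cN d α n / N ^ d) ^ 2 * (N ^ d * ∑ z ∈ S, ‖a z‖ ^ 2) := by
    rw [Finset.sum_congr rfl fun x _ => by rw [hrw x, norm_mul, mul_pow, habs_cst]]
    rw [← Finset.mul_sum, hplan]
  -- second Plancherel for the numerators
  set num : (Fin d → ℤ) → ℂ := fun z =>
    ∑ y ∈ boxZd d n, (Rn f n (tor n y) : ℂ) * e2pi (-(dotZ y z) / n) with hnum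
  have hplan2 : ∑ z ∈ boxZd d n, ‖num z‖ ^ 2
      = N ^ d * ∑ y ∈ boxZd d n, ‖(Rn f n (tor n y) : ℂ)‖ ^ 2 := by
    have := plancherel d n hn (boxZd d n) subset_rfl (fun y => (Rn f n (tor n y) : ℂ))
    rw [← this]
    refine Finset.sum_congr rfl fun z _ => ?_
    have hnz : num z = ∑ y ∈ boxZd d n, (Rn f n (tor n y) : ℂ) * e2pi (-(dotZ z y) / n) := by
      simp only [hnum]
      exact Finset.sum_congr rfl fun y _ => by rw [dotZ_comm y z]
    rw [hnz]
  -- bound on each |R|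
  have hRy : ∀ y ∈ boxZd d n, ‖(Rn f n (tor n y) : ℂ)‖ ^ 2
      ≤ (L / N ^ (d + 1)) ^ 2 := by
    intro y hy
    rw [Complex.norm_real, Real.norm_eq_abs]
    exact pow_le_pow_left₀ (abs_nonneg _) (hLb n hn y hy) 2
  have hR2 : ∑ y ∈ boxZd d n, ‖(Rn f n (tor n y) : ℂ)‖ ^ 2
      ≤ N ^ d * (L / N ^ (d + 1)) ^ 2 := by
    calc ∑ y ∈ boxZd d n, ‖(Rn f n (tor n y) : ℂ)‖ ^ 2
        ≤ ∑ _y ∈ boxZd d n, (L / N ^ (d + 1)) ^ 2 := Finset.sum_le_sum hRy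
      _ = N ^ d * (L / N ^ (d + 1)) ^ 2 := by
          rw [Finset.sum_const, card_boxZd, nsmul_eq_mul]
          push_cast
          ring
  -- bound a z via lambda
  have hA : ∑ z ∈ S, ‖a z‖ ^ 2
      ≤ N ^ 4 / 256 * ∑ z ∈ boxZd d n, ‖num z‖ ^ 2 := by
    have hterm : ∀ z ∈ S, ‖a z‖ ^ 2
        ≤ N ^ 4 / 256 * ‖num z‖ ^ 2 := by
      intro z hz
      have hz0 : z ≠ 0 := Finset.ne_of_mem_erase hz
      have hzb : z ∈ boxZd d n := hSsub hz
      have hlam := lambda_lb d n hn z hzb hz0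
      have hlampos : (0 : ℝ) < 16 / N ^ 2 := by positivity
      have ha2 : ‖a z‖ = ‖num z‖ / |lambdaN d n z| := by
        rw [ha]
        simp only []
        rw [norm_div, Complex.norm_real, Real.norm_eq_abs]
      have h256 : (256 : ℝ) / N ^ 4 ≤ |lambdaN d n z| ^ 2 := by
        calc (256 : ℝ) / N ^ 4 = (16 / N ^ 2) ^ 2 := by
              rw [div_pow, ← pow_mul]; norm_num
          _ ≤ |lambdaN d n z| ^ 2 := pow_le_pow_left₀ hlampos.le hlam 2
      rw [ha2, div_pow]
      calc ‖num z‖ ^ 2 / |lambdaN d n z| ^ 2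
          ≤ ‖num z‖ ^ 2 / (256 / N ^ 4) := by
            apply div_le_div_of_nonneg_left (by positivity) (by positivity) h256
        _ = N ^ 4 / 256 * ‖num z‖ ^ 2 := by
            rw [div_div_eq_mul_div]
            ring
    calc ∑ z ∈ S, ‖a z‖ ^ 2
        ≤ ∑ z ∈ S, N ^ 4 / 256 * ‖num z‖ ^ 2 := Finset.sum_le_sum hterm
      _ = N ^ 4 / 256 * ∑ z ∈ S, ‖num z‖ ^ 2 := by rw [Finset.mul_sum]
      _ ≤ N ^ 4 / 256 * ∑ z ∈ boxZd d n, ‖num z‖ ^ 2 := by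
          apply mul_le_mul_of_nonneg_left _ (by positivity)
          exact Finset.sum_le_sum_of_subset_of_nonneg hSsub fun z _ _ => by positivity
  -- combine
  have hApos : (0 : ℝ) ≤ ∑ z ∈ S, ‖a z‖ ^ 2 :=
    Finset.sum_nonneg fun z _ => by positivity
  have hAfinal : ∑ z ∈ S, ‖a z‖ ^ 2 ≤ L ^ 2 * N ^ 2 / 256 := by
    calc ∑ z ∈ S, ‖a z‖ ^ 2
        ≤ N ^ 4 / 256 * ∑ z ∈ boxZd d n, ‖num z‖ ^ 2 := hA
      _ ≤ N ^ 4 / 256 * (N ^ d * (N ^ d * (L / N ^ (d + 1)) ^ 2)) := by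
          apply mul_le_mul_of_nonneg_left _ (by positivity)
          rw [hplan2]
          exact mul_le_mul_of_nonneg_left hR2 (by positivity)
      _ = L ^ 2 * N ^ 2 / 256 := by
          field_simp
          ring
  -- rpow algebra
  set P : ℝ := N ^ (-(d : ℝ) / α - 2) with hP
  set t : ℝ := N ^ (-(d : ℝ) / α - 1) with htdef
  have hPpos : 0 < P := Real.rpow_pos_of_pos hN _
  have htpos : 0 < t := Real.rpow_pos_of_pos hN _
  have hcNd : cN d α n / N ^ d = 4 * Real.pi ^ 2 * P := by
    rw [cN, hP]
    rw [show (d : ℝ) - (d : ℝ) / α - 2 = (d : ℝ) + (-(d : ℝ) / α - 2) by ring,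
      Real.rpow_add hN, Real.rpow_natCast]
    field_simp
  have hPt : P ^ 2 * N ^ 2 = t ^ 2 := by
    rw [hP, htdef, ← Real.rpow_natCast (N ^ (-(d : ℝ) / α - 2)) 2,
      ← Real.rpow_natCast (N ^ (-(d : ℝ) / α - 1)) 2,
      ← Real.rpow_mul hN.le, ← Real.rpow_mul hN.le,
      ← Real.rpow_natCast N 2, ← Real.rpow_add hN]
    congr 1
    push_cast
    ring
  -- final bound on the square
  have hTbound : ((n : ℝ) ^ d)⁻¹ * ∑ x ∈ boxZd d n, ‖cnF f α n x‖ ^ 2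
      ≤ (Real.pi ^ 2 * (L + 1) / 4 * t) ^ 2 := by
    rw [hsum1, hcNd]
    have hc1 : ((n : ℝ) ^ d)⁻¹ * ((4 * Real.pi ^ 2 * P) ^ 2 *
        (N ^ d * ∑ z ∈ S, ‖a z‖ ^ 2))
        = (4 * Real.pi ^ 2 * P) ^ 2 * ∑ z ∈ S, ‖a z‖ ^ 2 := by
      rw [hNdef]
      field_simp
    rw [hc1]
    calc (4 * Real.pi ^ 2 * P) ^ 2 * ∑ z ∈ S, ‖a z‖ ^ 2
        ≤ (4 * Real.pi ^ 2 * P) ^ 2 * (L ^ 2 * N ^ 2 / 256) :=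
          mul_le_mul_of_nonneg_left hAfinal (by positivity)
      _ = Real.pi ^ 4 * L ^ 2 / 16 * (P ^ 2 * N ^ 2) := by ring
      _ = Real.pi ^ 4 * L ^ 2 / 16 * t ^ 2 := by rw [hPt]
      _ ≤ (Real.pi ^ 2 * (L + 1) / 4 * t) ^ 2 := by
          have hpi := Real.pi_pos
          nlinarith [sq_nonneg t, sq_nonneg (Real.pi ^ 2 * t), htpos.le]
  have hrhs0 : (0 : ℝ) ≤ Real.pi ^ 2 * (L + 1) / 4 * t := by positivity
  calc Real.sqrt (((n : ℝ) ^ d)⁻¹ * ∑ x ∈ boxZd d n, ‖cnF f α n x‖ ^ 2)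
      ≤ Real.sqrt ((Real.pi ^ 2 * (L + 1) / 4 * t) ^ 2) := Real.sqrt_le_sqrt hTbound
    _ = Real.pi ^ 2 * (L + 1) / 4 * t := Real.sqrt_sq hrhs0
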